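/- arXiv:2411.19936 — 4 statements merged into one kernel-verified Lean document; each statement's English description precedes it below -/
import Mathlib

section
/- The boundary Z ∖ 𝔥 equals the union, over all good root subsystems Φ′ of Φ, of the sets C(Φ′) := {x ∈ Z : x_λ = ∞ for every λ ∈ Φ⁺ ∖ Φ′}. -/
/-!
A point of `Z` with only finite coordinates satisfies every `ℚ`-linear relation among the positive
roots, so it is the image of a functional on `E`. The equations of `Z` forbid a relation whose
support carries exactly one infinite coordinate; hence for a boundary point `x` the span `V` of the
roots with finite coordinate is a proper subspace containing no root with infinite coordinate.
Enlarging `V` by roots to a hyperplane `W` spanned by roots, `Φ ∩ W` is a good subsystem and `x`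
lies in `C(Φ ∩ W)`. Conversely a good subsystem misses some positive root, whose coordinate is then
`∞`, so `C(Φ′)` does not meet `𝔥`.
-/

open scoped Classical
noncomputable section

/-- A reduced crystallographic root system spanning `E`. -/
def IsRootSystem {E : Type*} [AddCommGroup E] [Module ℚ E] (Φ : Set E) : Prop :=
  Φ.Finite ∧ (0 : E) ∉ Φ ∧ Submodule.span ℚ Φ = ⊤ ∧ (∀ α ∈ Φ, -α ∈ Φ) ∧
    (∀ α ∈ Φ, ∃ f : E →ₗ[ℚ] ℚ, f α = 2 ∧ (∀ β ∈ Φ, ∃ n : ℤ, f β = (n : ℚ)) ∧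
      ∀ β ∈ Φ, β - f β • α ∈ Φ) ∧
    ∀ α ∈ Φ, ∀ c : ℚ, c • α ∈ Φ → c = 1 ∨ c = -1

/-- Canonical homogeneous coordinates on `ℙ¹ = ℂ ∪ {∞}`. -/
def coordP1 : OnePoint ℂ → ℂ × ℂ :=
  fun x => Option.elim x (0, 1) fun c => (1, c)

/-- Membership in `Z`. -/
def memZ {E : Type*} [AddCommGroup E] [Module ℚ E] (Φpos : Finset E)
    (x : Φpos → OnePoint ℂ) : Prop :=
  ∀ c : Φpos → ℚ, ∑ l : Φpos, c l • (l : E) = 0 →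
    ∑ l ∈ Finset.univ.filter fun l : Φpos => c l ≠ 0,
      (c l : ℂ) * (coordP1 (x l)).2 *
        ∏ m ∈ (Finset.univ.filter fun m : Φpos => c m ≠ 0).erase l, (coordP1 (x m)).1 = 0

/-- The embedding of the Cartan subalgebra `Hom_ℚ(E, ℂ)` into `(ℙ¹)^{Φ⁺}`. -/
def embH {E : Type*} [AddCommGroup E] [Module ℚ E] (Φpos : Finset E)
    (f : E →ₗ[ℚ] ℂ) : Φpos → OnePoint ℂ :=
  fun l => ((f (l : E) : ℂ) : OnePoint ℂ)

/-- `Ψ` is a closed root subsystem of `Θ`. -/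
def IsClosedSub {E : Type*} [AddCommGroup E] (Θ Ψ : Set E) : Prop :=
  Ψ ⊆ Θ ∧ (∀ l ∈ Ψ, -l ∈ Ψ) ∧ ∀ l ∈ Ψ, ∀ m ∈ Ψ, l + m ∈ Θ → l + m ∈ Ψ

/-- The rank of a subset: the dimension of its `ℚ`-linear span. -/
def rankOf {E : Type*} [AddCommGroup E] [Module ℚ E] (Ψ : Set E) : ℕ :=
  Module.finrank ℚ (Submodule.span ℚ Ψ)

/-- `Ψ` is a maximal closed root subsystem of `Θ` of rank `m`. -/
def IsMaxClosedOfRank {E : Type*} [AddCommGroup E] [Module ℚ E] (Θ Ψ : Set E) (m : ℕ) : Prop :=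
  IsClosedSub Θ Ψ ∧ rankOf Ψ = m ∧
    ∀ Ψ' : Set E, IsClosedSub Θ Ψ' → rankOf Ψ' = m → Ψ ⊆ Ψ' → Ψ' = Ψ

open Module Submodule

theorem LinearMap.exists_comp_eq_of_ker_le {R M N P : Type*} [Ring R] [AddCommGroup M]
    [AddCommGroup N] [AddCommGroup P] [Module R M] [Module R N] [Module R P]
    (T : M →ₗ[R] N) (hT : Function.Surjective T) (g : M →ₗ[R] P) (h : ker T ≤ ker g) :
    ∃ f : N →ₗ[R] P, f ∘ₗ T = g :=
  ⟨(ker T).liftQ g h ∘ₗ (T.quotKerEquivOfSurjective hT).symm.toLinearMap, by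
    ext v
    simp⟩

theorem exists_superset_finrank_span_add_one {K V : Type*} [DivisionRing K] [AddCommGroup V]
    [Module K V] [FiniteDimensional K V] {s T : Set V} (hs : span K s = ⊤) (hTs : T ⊆ s)
    (hT : span K T ≠ ⊤) :
    ∃ T', T ⊆ T' ∧ T' ⊆ s ∧ finrank K (span K T') + 1 = finrank K V := by
  obtain ⟨n, hn⟩ : ∃ n, finrank K (span K T) + n + 1 = finrank K V :=
    ⟨finrank K V - finrank K (span K T) - 1, by have := Submodule.finrank_lt hT; omega⟩
  clear hT
  induction n generalizing T with
  | zero => exact ⟨T, subset_rfl, hTs, by simpa using hn⟩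
  | succ n ih =>
    obtain ⟨β, hβs, hβT⟩ : ∃ β ∈ s, β ∉ span K T := by
      by_contra! h
      have htop : span K T = ⊤ := top_le_iff.mp (hs ▸ span_le.mpr h)
      rw [htop, finrank_top] at hn
      omega
    have hlt : span K T < span K (insert β T) :=
      (span_mono (Set.subset_insert _ _)).lt_of_ne fun h => hβT (h ▸ subset_span (by simp))
    have hle : finrank K (span K (insert β T)) ≤ finrank K (span K T) + 1 := by
      have hβ0 : β ≠ 0 := fun h => hβT (h ▸ zero_mem _)
      rw [span_insert, sup_comm, ← finrank_span_singleton (K := K) hβ0]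
      exact Submodule.finrank_add_le_finrank_add_finrank _ _
    have := Submodule.finrank_lt_finrank_of_lt hlt
    obtain ⟨T', hT', hT's, hrank⟩ := ih (Set.insert_subset hβs hTs) (by omega)
    exact ⟨T', (Set.subset_insert _ _).trans hT', hT's, hrank⟩

theorem span_positive_eq_top {K V : Type*} [Field K] [LinearOrder K] [IsStrictOrderedRing K]
    [AddCommGroup V] [Module K V] {Φ Φpos : Set V} (hspan : span K Φ = ⊤)
    (hneg : ∀ α ∈ Φ, -α ∈ Φ) {ℓ : V →ₗ[K] K} (hℓ : ∀ α ∈ Φ, ℓ α ≠ 0)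
    (hpos : ∀ a, a ∈ Φpos ↔ a ∈ Φ ∧ 0 < ℓ a) :
    span K Φpos = ⊤ := by
  rw [eq_top_iff, ← hspan, span_le]
  intro α hα
  rcases (hℓ α hα).lt_or_gt with hlt | hgt
  · have hmem : -α ∈ Φpos := (hpos _).mpr ⟨hneg α hα, by rw [map_neg]; linarith⟩
    simpa using neg_mem (subset_span (R := K) hmem)
  · exact subset_span ((hpos α).mpr ⟨hα, hgt⟩)

section RootSubsystem

variable {E : Type*} [AddCommGroup E] [Module ℚ E]

theorem isClosedSub_inter_submodule {Φ : Set E} (hneg : ∀ α ∈ Φ, -α ∈ Φ) (W : Submodule ℚ E) :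
    IsClosedSub Φ (Φ ∩ W) :=
  ⟨Set.inter_subset_left, fun _ hl => ⟨hneg _ hl.1, neg_mem hl.2⟩,
    fun _ hl _ hm hsum => ⟨hsum, add_mem hl.2 hm.2⟩⟩

theorem isMaxClosedOfRank_inter_span [FiniteDimensional ℚ E] {Φ T : Set E}
    (hneg : ∀ α ∈ Φ, -α ∈ Φ) (hT : T ⊆ Φ) :
    IsMaxClosedOfRank Φ (Φ ∩ span ℚ T) (finrank ℚ (span ℚ T)) := by
  have hspan : span ℚ (Φ ∩ span ℚ T) = span ℚ T :=
    le_antisymm (span_le.mpr Set.inter_subset_right)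
      (span_mono fun t ht => ⟨hT ht, subset_span ht⟩)
  refine ⟨isClosedSub_inter_submodule hneg _, by rw [rankOf, hspan], ?_⟩
  intro Ψ hΨ hrank hsub
  have hle : span ℚ T ≤ span ℚ Ψ := hspan ▸ span_mono hsub
  have heq : span ℚ T = span ℚ Ψ := eq_of_le_of_finrank_le hle (by rw [← hrank, rankOf])
  exact subset_antisymm (fun ψ hψ => ⟨hΨ.1 hψ, heq ▸ subset_span hψ⟩) hsub

theorem exists_mem_notMem_of_rankOf_lt [FiniteDimensional ℚ E] {s Ψ : Set E}
    (hs : span ℚ s = ⊤) (hΨ : rankOf Ψ < finrank ℚ E) : ∃ l ∈ s, l ∉ Ψ := by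
  by_contra! hsub
  have htop : span ℚ Ψ = ⊤ := top_le_iff.mp (hs ▸ span_mono hsub)
  rw [rankOf, htop, finrank_top] at hΨ
  exact hΨ.false

end RootSubsystem

section PointsOfZ

variable {E : Type*} [AddCommGroup E] [Module ℚ E] {Φpos : Finset E}

theorem coordP1_infty : coordP1 OnePoint.infty = (0, 1) := rfl

theorem coordP1_coe (z : ℂ) : coordP1 z = (1, z) := rfl

theorem memZ.ne_infty_of_relation {x : Φpos → OnePoint ℂ} (hx : memZ Φpos x) {c : Φpos → ℚ}
    (hc : ∑ l, c l • (l : E) = 0) {a : Φpos} (ha : c a ≠ 0)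
    (hfin : ∀ m ≠ a, c m ≠ 0 → x m ≠ OnePoint.infty) :
    x a ≠ OnePoint.infty := by
  intro hinf
  have h := hx c hc
  set F := Finset.univ.filter fun l : Φpos => c l ≠ 0
  have haF : a ∈ F := by simpa [F] using ha
  rw [Finset.sum_eq_single_of_mem a haF fun b _ hba => ?_] at h
  · have hone : ∀ m ∈ F.erase a, (coordP1 (x m)).1 = 1 := fun m hm => by
      obtain ⟨hma, hmF⟩ := Finset.mem_erase.mp hm
      obtain ⟨z, hz⟩ := OnePoint.ne_infty_iff_exists.mp (hfin m hma (by simpa [F] using hmF))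
      rw [← hz]; rfl
    rw [Finset.prod_congr rfl hone, hinf] at h
    simp [coordP1_infty, ha] at h
  · rw [Finset.prod_eq_zero (Finset.mem_erase.mpr ⟨Ne.symm hba, haF⟩) (by rw [hinf]; rfl),
      mul_zero]

theorem memZ.ne_infty_of_mem_span {x : Φpos → OnePoint ℂ} (hx : memZ Φpos x) {a : Φpos}
    (ha : (a : E) ∈ span ℚ (Subtype.val '' {l | x l ≠ OnePoint.infty})) :
    x a ≠ OnePoint.infty := by
  intro hinf
  obtain ⟨c, hcS, hca⟩ := (Finsupp.mem_span_image_iff_linearCombination ℚ).mp ha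
  have hc0 : c a = 0 := Finsupp.notMem_support_iff.mp fun h => hcS h hinf
  refine hx.ne_infty_of_relation (c := ⇑c - Pi.single a 1) ?_ (by simp [hc0])
    (fun m hma hm => hcS (Finsupp.mem_support_iff.mpr (by simpa [hma] using hm))) hinf
  rw [← sub_eq_zero.mpr hca, Finsupp.linearCombination_apply, Finsupp.sum_fintype _ _ (by simp)]
  simp [sub_smul, Pi.single_apply]

theorem memZ.coe_mem_range_embH {y : Φpos → ℂ} (hy : memZ Φpos fun l => (y l : OnePoint ℂ))
    (hspan : span ℚ (Φpos : Set E) = ⊤) :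
    (fun l => (y l : OnePoint ℂ)) ∈ Set.range (embH Φpos) := by
  have hrel (c : Φpos → ℚ) (hc : ∑ l, c l • (l : E) = 0) : ∑ l, c l • y l = 0 := by
    have h := hy c hc
    simp only [coordP1_coe, Finset.prod_const_one, mul_one] at h
    rw [← h,
      Finset.sum_filter_of_ne (p := fun l => c l ≠ 0) fun l _ hl hcl => hl (by simp [hcl])]
    simp only [Rat.smul_def]
  set T := Fintype.linearCombination ℚ fun l : Φpos => (l : E)
  have hT : Function.Surjective T := by
    rw [← LinearMap.range_eq_top, Fintype.range_linearCombination]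
    simpa using hspan
  obtain ⟨f, hf⟩ := T.exists_comp_eq_of_ker_le hT (Fintype.linearCombination ℚ y)
    fun c hc => hrel c (by simpa [T, Fintype.linearCombination_apply] using hc)
  refine ⟨f, funext fun l => ?_⟩
  have := LinearMap.congr_fun hf (Pi.single l 1)
  simp [T, Fintype.linearCombination_apply_single] at this
  simp [embH, this]

theorem memZ.exists_isMaxClosedOfRank_of_infty [FiniteDimensional ℚ E] {Φ : Set E}
    (hspan : span ℚ Φ = ⊤) (hneg : ∀ α ∈ Φ, -α ∈ Φ) (hΦpos : ∀ l ∈ Φpos, l ∈ Φ)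
    {x : Φpos → OnePoint ℂ} (hx : memZ Φpos x) {μ : Φpos} (hμ : x μ = OnePoint.infty) :
    ∃ Φ', IsMaxClosedOfRank Φ Φ' (finrank ℚ E - 1) ∧
      ∀ (l : E) (h : l ∈ Φpos), l ∉ Φ' → x ⟨l, h⟩ = OnePoint.infty := by
  set S := Subtype.val '' {l | x l ≠ OnePoint.infty}
  have hS : span ℚ S ≠ ⊤ := fun h => hx.ne_infty_of_mem_span (h ▸ mem_top) hμ
  obtain ⟨T, hST, hTΦ, hT⟩ := exists_superset_finrank_span_add_one hspan
    (by rintro _ ⟨l, -, rfl⟩; exact hΦpos l l.2) hS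
  refine ⟨Φ ∩ span ℚ T, (by omega : finrank ℚ (span ℚ T) = finrank ℚ E - 1) ▸
    isMaxClosedOfRank_inter_span hneg hTΦ, fun l hl hlW => ?_⟩
  by_contra hne
  exact hlW ⟨hΦpos l hl, subset_span (hST ⟨⟨l, hl⟩, hne, rfl⟩)⟩

end PointsOfZ

theorem statement2 {E : Type*} [AddCommGroup E] [Module ℚ E] [FiniteDimensional ℚ E]
    (hr : 1 ≤ Module.finrank ℚ E)
    (Φ : Set E) (hΦ : IsRootSystem Φ)
    (ℓ : E →ₗ[ℚ] ℚ) (hℓ : ∀ α ∈ Φ, ℓ α ≠ 0)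
    (Φpos : Finset E) (hpos : ∀ a : E, a ∈ Φpos ↔ a ∈ Φ ∧ 0 < ℓ a) :
    {x : Φpos → OnePoint ℂ | memZ Φpos x} \ Set.range (embH Φpos)
      = ⋃ Φ' ∈ {Ψ : Set E | IsMaxClosedOfRank Φ Ψ (Module.finrank ℚ E - 1)},
          {x : Φpos → OnePoint ℂ | memZ Φpos x ∧
            ∀ (l : E) (h : l ∈ Φpos), l ∉ Φ' → x ⟨l, h⟩ = OnePoint.infty} := by
  obtain ⟨-, -, hspan, hneg, -, -⟩ := hΦ
  have hposΦ : ∀ l ∈ Φpos, l ∈ Φ := fun l hl => ((hpos l).mp hl).1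
  have hspanpos : span ℚ (Φpos : Set E) = ⊤ :=
    span_positive_eq_top hspan hneg hℓ (by simpa using hpos)
  ext x
  simp only [Set.mem_sdiff, Set.mem_ofPred_eq, Set.mem_iUnion, exists_prop]
  constructor
  · rintro ⟨hxZ, hxh⟩
    obtain ⟨μ, hμ⟩ : ∃ μ, x μ = OnePoint.infty := by
      by_contra! hfin
      choose y hy using fun l => OnePoint.ne_infty_iff_exists.mp (hfin l)
      obtain rfl : (fun l => (y l : OnePoint ℂ)) = x := funext hy
      exact hxh (hxZ.coe_mem_range_embH hspanpos)
    obtain ⟨Φ', hΦ', hinf⟩ := hxZ.exists_isMaxClosedOfRank_of_infty hspan hneg hposΦ hμ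
    exact ⟨Φ', hΦ', hxZ, hinf⟩
  · rintro ⟨Φ', ⟨-, hrank, -⟩, hxZ, hinf⟩
    obtain ⟨l, hl, hlΦ'⟩ := exists_mem_notMem_of_rankOf_lt (Ψ := Φ') hspanpos (by omega)
    exact ⟨hxZ, fun ⟨f, hf⟩ => OnePoint.coe_ne_infty _ (hf ▸ hinf l hl hlΦ')⟩
end
end

section
/- A subset Ψ ⊆ Φ is a good root subsystem of Φ if and only if Ψ is a maximal element, with respect to inclusion, of the collection of proper parabolic root subsystems of Φ, where a parabolic root subsystem of Φ is a subset of the form Span_ℚ(S) ∩ Φ for some S ⊆ Φ. -/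
open scoped Classical
noncomputable section

/-- A parabolic root subsystem of `Φ`: a subset of the form `Span_ℚ(S) ∩ Φ`
for some `S ⊆ Φ`. -/
def IsParabolic {E : Type*} [AddCommGroup E] [Module ℚ E] (Φ Ψ : Set E) : Prop :=
  ∃ S : Set E, S ⊆ Φ ∧ Ψ = (Submodule.span ℚ S : Set E) ∩ Φ

/-!
A closed subsystem `Ψ` lies in the parabolic subsystem `Span(Ψ) ∩ Φ`, which is again closed and
has the same rank, so maximal closed subsystems of any rank are parabolic. Since `Φ` spans `E`,
a parabolic subsystem `V ∩ Φ` is proper exactly when `V` is a proper subspace, i.e. when its rank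
is below `r`. Conversely, if `Ψ` is a maximal proper parabolic subsystem and `α` is a root outside
`Span(Ψ)`, then `Span(Ψ) + ℚα` cannot be proper, so `Span(Ψ)` is a hyperplane.
-/

open Submodule

section RootSubsystems

variable {E : Type*} [AddCommGroup E] [Module ℚ E] {Φ Ψ : Set E}

def IsMaxProperParabolic (Φ Ψ : Set E) : Prop :=
  IsParabolic Φ Ψ ∧ Ψ ≠ Φ ∧ ∀ Ψ' : Set E, IsParabolic Φ Ψ' → Ψ' ≠ Φ → Ψ ⊆ Ψ' → Ψ' = Ψ

lemma isClosedSub_inter (hneg : ∀ α ∈ Φ, -α ∈ Φ) (p : Submodule ℚ E) :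
    IsClosedSub Φ ((p : Set E) ∩ Φ) :=
  ⟨Set.inter_subset_right, fun _ ⟨hl, hlΦ⟩ => ⟨p.neg_mem hl, hneg _ hlΦ⟩,
    fun _ ⟨hl, _⟩ _ ⟨hm, _⟩ hΦ => ⟨p.add_mem hl hm, hΦ⟩⟩

lemma subset_span_inter (hΨ : Ψ ⊆ Φ) : Ψ ⊆ (span ℚ Ψ : Set E) ∩ Φ :=
  fun _ hx => ⟨subset_span hx, hΨ hx⟩

lemma span_inter_span {S : Set E} (hS : S ⊆ Φ) :
    span ℚ ((span ℚ S : Set E) ∩ Φ) = span ℚ S :=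
  le_antisymm (span_le.2 Set.inter_subset_left) (span_mono (subset_span_inter hS))

lemma isParabolic_inter (p : Submodule ℚ E) : IsParabolic Φ ((p : Set E) ∩ Φ) := by
  refine ⟨(p : Set E) ∩ Φ, Set.inter_subset_right, ?_⟩
  refine subset_antisymm (subset_span_inter Set.inter_subset_right) ?_
  exact Set.inter_subset_inter_left _ (span_le.2 Set.inter_subset_left)

lemma IsParabolic.subset (h : IsParabolic Φ Ψ) : Ψ ⊆ Φ := by
  obtain ⟨S, -, rfl⟩ := h
  exact Set.inter_subset_right

lemma IsParabolic.eq_span_inter (h : IsParabolic Φ Ψ) : Ψ = (span ℚ Ψ : Set E) ∩ Φ := by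
  obtain ⟨S, hS, rfl⟩ := h
  rw [span_inter_span hS]

lemma inter_eq_self_iff_eq_top (hspan : span ℚ Φ = ⊤) (p : Submodule ℚ E) :
    (p : Set E) ∩ Φ = Φ ↔ p = ⊤ := by
  rw [Set.inter_eq_right, ← span_le, hspan, top_le_iff]

lemma isParabolic_of_isMaxClosedOfRank (hneg : ∀ α ∈ Φ, -α ∈ Φ) {m : ℕ}
    (h : IsMaxClosedOfRank Φ Ψ m) : IsParabolic Φ Ψ := by
  obtain ⟨hclosed, hrank, hmax⟩ := h
  have hrank' : rankOf ((span ℚ Ψ : Set E) ∩ Φ) = m := by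
    rw [rankOf, span_inter_span hclosed.1, ← hrank, rankOf]
  rw [← hmax _ (isClosedSub_inter hneg _) hrank' (subset_span_inter hclosed.1)]
  exact isParabolic_inter _

lemma span_ne_top_of_rankOf_eq (hr : 1 ≤ Module.finrank ℚ E)
    (h : rankOf Ψ = Module.finrank ℚ E - 1) : span ℚ Ψ ≠ ⊤ := by
  intro htop
  rw [rankOf, htop, finrank_top] at h
  omega

lemma IsMaxProperParabolic.inter_eq (hspan : span ℚ Φ = ⊤) (h : IsMaxProperParabolic Φ Ψ)
    {q : Submodule ℚ E} (hq : span ℚ Ψ ≤ q) (hq_ne : q ≠ ⊤) : (q : Set E) ∩ Φ = Ψ :=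
  h.2.2 _ (isParabolic_inter q) (mt (inter_eq_self_iff_eq_top hspan q).1 hq_ne)
    fun _ hx => ⟨hq (subset_span hx), h.1.subset hx⟩

variable [FiniteDimensional ℚ E]

lemma IsMaxClosedOfRank.isMaxProperParabolic (hr : 1 ≤ Module.finrank ℚ E)
    (hspan : span ℚ Φ = ⊤) (hneg : ∀ α ∈ Φ, -α ∈ Φ)
    (h : IsMaxClosedOfRank Φ Ψ (Module.finrank ℚ E - 1)) : IsMaxProperParabolic Φ Ψ := by
  refine ⟨isParabolic_of_isMaxClosedOfRank hneg h, ?_, ?_⟩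
  · rintro rfl
    exact span_ne_top_of_rankOf_eq hr h.2.1 hspan
  · intro Ψ' hΨ' hne hsub
    have hproper : span ℚ Ψ' ≠ ⊤ := by
      rwa [hΨ'.eq_span_inter, Ne, inter_eq_self_iff_eq_top hspan] at hne
    have hrank : rankOf Ψ' = Module.finrank ℚ E - 1 := by
      have hlt : rankOf Ψ' < Module.finrank ℚ E := finrank_lt hproper
      have hge : rankOf Ψ ≤ rankOf Ψ' := finrank_mono (span_mono hsub)
      have hΨrank := h.2.1
      omega
    refine h.2.2 Ψ' ?_ hrank hsub
    rw [hΨ'.eq_span_inter]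
    exact isClosedSub_inter hneg _

lemma IsMaxProperParabolic.rankOf_eq (hspan : span ℚ Φ = ⊤) (h : IsMaxProperParabolic Φ Ψ) :
    rankOf Ψ = Module.finrank ℚ E - 1 := by
  obtain ⟨α, hαΦ, hα⟩ : ∃ α ∈ Φ, α ∉ span ℚ Ψ := by
    by_contra! hall
    exact h.2.1 (h.1.eq_span_inter.trans (Set.inter_eq_right.2 hall))
  have htop : span ℚ Ψ ⊔ span ℚ {α} = ⊤ := by
    by_contra hne
    have hαΨ : α ∈ Ψ := by
      rw [← h.inter_eq hspan le_sup_left hne]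
      exact ⟨mem_sup_right (mem_span_singleton_self α), hαΦ⟩
    exact hα (subset_span hαΨ)
  have hdim := finrank_sup_span_singleton hα
  rw [htop, finrank_top] at hdim
  rw [rankOf]
  omega

lemma IsMaxProperParabolic.isMaxClosedOfRank (hr : 1 ≤ Module.finrank ℚ E)
    (hspan : span ℚ Φ = ⊤) (hneg : ∀ α ∈ Φ, -α ∈ Φ) (h : IsMaxProperParabolic Φ Ψ) :
    IsMaxClosedOfRank Φ Ψ (Module.finrank ℚ E - 1) := by
  refine ⟨?_, h.rankOf_eq hspan, fun Ψ' hΨ' hrank hsub => ?_⟩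
  · rw [h.1.eq_span_inter]
    exact isClosedSub_inter hneg _
  · have hΨ'Ψ : Ψ' ⊆ Ψ := by
      rw [← h.inter_eq hspan (span_mono hsub) (span_ne_top_of_rankOf_eq hr hrank)]
      exact subset_span_inter hΨ'.1
    exact hΨ'Ψ.antisymm hsub

end RootSubsystems

theorem statement10 {E : Type*} [AddCommGroup E] [Module ℚ E] [FiniteDimensional ℚ E]
    (hr : 1 ≤ Module.finrank ℚ E)
    (Φ : Set E) (hΦ : IsRootSystem Φ) (Ψ : Set E) :
    IsMaxClosedOfRank Φ Ψ (Module.finrank ℚ E - 1) ↔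
      (IsParabolic Φ Ψ ∧ Ψ ≠ Φ ∧
        ∀ Ψ' : Set E, IsParabolic Φ Ψ' → Ψ' ≠ Φ → Ψ ⊆ Ψ' → Ψ' = Ψ) := by
  obtain ⟨-, -, hspan, hneg, -, -⟩ := hΦ
  exact ⟨IsMaxClosedOfRank.isMaxProperParabolic hr hspan hneg,
    IsMaxProperParabolic.isMaxClosedOfRank hr hspan hneg⟩
end
end

section
/- For every integer m with 0 ≤ m ≤ r, the number of maximal closed root subsystems of Φ of rank m equals the number of subspaces X in the intersection lattice L(𝒜) := { {φ ∈ E* : φ(λ) = 0 for all λ ∈ S} : S ⊆ Φ } with codimension m in E*. (Both sets are finite.) -/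
open scoped Classical
noncomputable section

/-- The annihilator `S^⊥ = {φ ∈ E* : φ(λ) = 0 for all λ ∈ S}` of a subset `S ⊆ E`. -/
def perpSet {E : Type*} [AddCommGroup E] [Module ℚ E] (S : Set E) :
    Set (Module.Dual ℚ E) :=
  {φ : Module.Dual ℚ E | ∀ l ∈ S, φ l = 0}

-- AUX

lemma perpSet_eq_ann {E : Type*} [AddCommGroup E] [Module ℚ E] (S : Set E) :
    perpSet S = ↑((Submodule.span ℚ S).dualAnnihilator) := by
  ext φ
  simp only [perpSet, Set.mem_setOf_eq, SetLike.mem_coe, Submodule.mem_dualAnnihilator]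
  constructor
  · intro h v hv
    have : Submodule.span ℚ S ≤ LinearMap.ker φ :=
      Submodule.span_le.mpr (fun l hl => h l hl)
    exact this hv
  · intro h l hl
    exact h l (Submodule.subset_span hl)

lemma ann_finrank {E : Type*} [AddCommGroup E] [Module ℚ E] [FiniteDimensional ℚ E]
    (W : Submodule ℚ E) :
    Module.finrank ℚ W + Module.finrank ℚ W.dualAnnihilator = Module.finrank ℚ E := by
  have h1 := LinearEquiv.finrank_eq (Subspace.quotEquivAnnihilator W)
  have h2 := Submodule.finrank_quotient_add_finrank W
  omega

-- Φ ∩ a submodule is a closed subsystem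
lemma closed_inter {E : Type*} [AddCommGroup E] [Module ℚ E] (Φ : Set E)
    (hneg : ∀ α ∈ Φ, -α ∈ Φ) (W : Submodule ℚ E) :
    IsClosedSub Φ (Φ ∩ ↑W) := by
  refine ⟨Set.inter_subset_left, ?_, ?_⟩
  · rintro l ⟨hl1, hl2⟩
    exact ⟨hneg l hl1, W.neg_mem hl2⟩
  · rintro l ⟨hl1, hl2⟩ m ⟨hm1, hm2⟩ h
    exact ⟨h, W.add_mem hl2 hm2⟩

lemma max_eq_inter {E : Type*} [AddCommGroup E] [Module ℚ E] (Φ : Set E)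
    (hneg : ∀ α ∈ Φ, -α ∈ Φ) {Ψ : Set E} {m : ℕ}
    (h : IsMaxClosedOfRank Φ Ψ m) : Ψ = Φ ∩ ↑(Submodule.span ℚ Ψ) := by
  obtain ⟨hc, hrk, hmax⟩ := h
  have hsub : Ψ ⊆ Φ ∩ ↑(Submodule.span ℚ Ψ) :=
    fun x hx => ⟨hc.1 hx, Submodule.subset_span hx⟩
  have hspan : Submodule.span ℚ (Φ ∩ ↑(Submodule.span ℚ Ψ)) = Submodule.span ℚ Ψ := by
    apply le_antisymm
    · rw [Submodule.span_le]
      intro x hx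
      exact hx.2
    · exact Submodule.span_mono hsub
  have := hmax _ (closed_inter Φ hneg _) (by rw [rankOf, hspan]; exact hrk) hsub
  exact this.symm

theorem statement14 {E : Type*} [AddCommGroup E] [Module ℚ E] [FiniteDimensional ℚ E]
    (hr : 1 ≤ Module.finrank ℚ E)
    (Φ : Set E) (hΦ : IsRootSystem Φ)
    (m : ℕ) (hm : m ≤ Module.finrank ℚ E) :
    {Ψ : Set E | IsMaxClosedOfRank Φ Ψ m}.Finite ∧
    {X : Set (Module.Dual ℚ E) | (∃ S : Set E, S ⊆ Φ ∧ X = perpSet S) ∧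
      Module.finrank ℚ (Module.Dual ℚ E)
        = Module.finrank ℚ (Submodule.span ℚ X) + m}.Finite ∧
    {Ψ : Set E | IsMaxClosedOfRank Φ Ψ m}.ncard
      = {X : Set (Module.Dual ℚ E) | (∃ S : Set E, S ⊆ Φ ∧ X = perpSet S) ∧
          Module.finrank ℚ (Module.Dual ℚ E)
            = Module.finrank ℚ (Submodule.span ℚ X) + m}.ncard := by
  obtain ⟨hfin, -, -, hneg, -, -⟩ := hΦ
  set A := {Ψ : Set E | IsMaxClosedOfRank Φ Ψ m} with hA
  set B := {X : Set (Module.Dual ℚ E) | (∃ S : Set E, S ⊆ Φ ∧ X = perpSet S) ∧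
      Module.finrank ℚ (Module.Dual ℚ E)
        = Module.finrank ℚ (Submodule.span ℚ X) + m} with hB
  have hAfin : A.Finite := by
    apply Set.Finite.subset hfin.finite_subsets
    intro Ψ hΨ
    exact hΨ.1.1
  -- span of perpSet
  have spanperp : ∀ S : Set E, Submodule.span ℚ (perpSet S)
      = (Submodule.span ℚ S).dualAnnihilator := by
    intro S
    rw [perpSet_eq_ann, Submodule.span_eq]
  have hbij : Set.BijOn (fun Ψ => perpSet Ψ) A B := by
    refine ⟨?_, ?_, ?_⟩
    · -- MapsTo
      intro Ψ hΨ
      refine ⟨⟨Ψ, hΨ.1.1, rfl⟩, ?_⟩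
      rw [spanperp, Subspace.dual_finrank_eq]
      have := ann_finrank (E := E) (Submodule.span ℚ Ψ)
      have hrk : Module.finrank ℚ (Submodule.span ℚ Ψ) = m := hΨ.2.1
      omega
    · -- InjOn
      intro Ψ1 h1 Ψ2 h2 heq
      have heq' : (Submodule.span ℚ Ψ1).dualAnnihilator
          = (Submodule.span ℚ Ψ2).dualAnnihilator := by
        have := congrArg (Submodule.span ℚ) heq
        rwa [spanperp, spanperp] at this
      have hspan : Submodule.span ℚ Ψ1 = Submodule.span ℚ Ψ2 :=
        Subspace.dualAnnihilator_inj.mp heq'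
      rw [max_eq_inter Φ hneg h1, max_eq_inter Φ hneg h2, hspan]
    · -- SurjOn
      rintro X ⟨⟨S, hS, rfl⟩, hco⟩
      set W := Submodule.span ℚ S with hW
      set Ψ := Φ ∩ (W : Set E) with hΨdef
      have hSΨ : S ⊆ Ψ := fun x hx => ⟨hS hx, Submodule.subset_span hx⟩
      have hspan : Submodule.span ℚ Ψ = W := by
        apply le_antisymm
        · rw [Submodule.span_le]; intro x hx; exact hx.2
        · exact Submodule.span_mono hSΨ
      have hWm : Module.finrank ℚ W = m := by
        rw [spanperp, Subspace.dual_finrank_eq, ← hW] at hco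
        have := ann_finrank (E := E) W
        omega
      refine ⟨Ψ, ⟨closed_inter Φ hneg W, by rw [rankOf, hspan]; exact hWm, ?_⟩, ?_⟩
      · intro Ψ' hc' hrk' hsub'
        have hle : Submodule.span ℚ Ψ ≤ Submodule.span ℚ Ψ' := Submodule.span_mono hsub'
        have hspaneq : Submodule.span ℚ Ψ = Submodule.span ℚ Ψ' := by
          apply Submodule.eq_of_le_of_finrank_eq hle
          show rankOf Ψ = rankOf Ψ'
          rw [hrk', rankOf, hspan]
          exact hWm
        apply Set.Subset.antisymm
        · intro x hx
          refine ⟨hc'.1 hx, ?_⟩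
          rw [← hspan, hspaneq]
          exact Submodule.subset_span hx
        · exact hsub'
      · show perpSet Ψ = perpSet S
        rw [perpSet_eq_ann, perpSet_eq_ann, hspan]
  exact ⟨hAfin, hbij.image_eq ▸ hAfin.image _,
    hbij.image_eq ▸ (Set.ncard_image_of_injOn hbij.injOn).symm⟩
end
end

section
/- For every integer k with 0 ≤ k ≤ r, the assignment Ψ ↦ F(Ψ) is a bijection from the set of maximal closed root subsystems of Φ of rank r − k onto the set of subsets P ⊆ Φ⁺ of cardinality r − k satisfying condition (⋆), and its inverse is P ↦ G(P). -/
open scoped Classical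
noncomputable section

/-- The (1-based) standard basis vector `e_i` of `ℚ^{r+1}`. -/
def eA (r : ℕ) (i : ℕ) : Fin (r + 1) → ℚ := fun t => if (t : ℕ) + 1 = i then 1 else 0

/-- The positive root `α_{i,j} = e_i − e_{j+1}` of type `A_r`. -/
def alphaA (r : ℕ) (i j : ℕ) : Fin (r + 1) → ℚ := eA r i - eA r (j + 1)

/-- The root system of type `A_r`: the vectors `e_i − e_j`, `1 ≤ i, j ≤ r+1`, `i ≠ j`. -/
def rootsA (r : ℕ) : Set (Fin (r + 1) → ℚ) :=
  {v | ∃ i j : ℕ, 1 ≤ i ∧ i ≤ r + 1 ∧ 1 ≤ j ∧ j ≤ r + 1 ∧ i ≠ j ∧ v = eA r i - eA r j}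

/-- The positive roots of type `A_r`: the `α_{i,j}` for `1 ≤ i ≤ j ≤ r`. -/
def posA (r : ℕ) : Set (Fin (r + 1) → ℚ) :=
  {v | ∃ i j : ℕ, 1 ≤ i ∧ i ≤ j ∧ j ≤ r ∧ v = alphaA r i j}

/-- `F(Ψ)`: the `α_{i,j} ∈ Ψ` such that no `α_{i,j′}` with `i ≤ j′ < j` lies in `Ψ`
and no `α_{i′,j}` with `i < i′ ≤ j` lies in `Ψ`. -/
def FmapA (r : ℕ) (Ψ : Set (Fin (r + 1) → ℚ)) : Set (Fin (r + 1) → ℚ) :=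
  {v | ∃ i j : ℕ, 1 ≤ i ∧ i ≤ j ∧ j ≤ r ∧ v = alphaA r i j ∧ v ∈ Ψ ∧
    (∀ j' : ℕ, i ≤ j' → j' < j → alphaA r i j' ∉ Ψ) ∧
    ∀ i' : ℕ, i < i' → i' ≤ j → alphaA r i' j ∉ Ψ}

/-- Condition (⋆): any two distinct elements `α_{i,j}` and `α_{i′,j′}` of `P`
have `i ≠ i′` and `j ≠ j′`. -/
def starA (r : ℕ) (P : Set (Fin (r + 1) → ℚ)) : Prop :=
  ∀ i j i' j' : ℕ, 1 ≤ i → i ≤ j → j ≤ r → 1 ≤ i' → i' ≤ j' → j' ≤ r →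
    alphaA r i j ∈ P → alphaA r i' j' ∈ P → alphaA r i j ≠ alphaA r i' j' →
    i ≠ i' ∧ j ≠ j'

/-- `G(P)`: the smallest closed root subsystem of `Φ` containing `P`, i.e. the
intersection of all closed root subsystems of `Φ` that contain `P`. -/
def GmapA (r : ℕ) (P : Set (Fin (r + 1) → ℚ)) : Set (Fin (r + 1) → ℚ) :=
  ⋂₀ {Θ : Set (Fin (r + 1) → ℚ) | IsClosedSub (rootsA r) Θ ∧ P ⊆ Θ}

/-!
A closed subsystem `Ψ` of `A_r` consists of the roots `e_a - e_b`, `a ≠ b`, with `a` and `b` in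
the same block of a partition of `{1, …, r + 1}`, and `F(Ψ)` consists of the roots joining
consecutive elements of a block. Telescoping along a block gives `G(F(Ψ)) = Ψ`. Conversely, (⋆)
says that every index has at most one outgoing and one incoming edge of `P`, so the blocks of
`G(P)` are increasing paths of edges of `P`, and `F(G(P)) = P`. The vectors `α_{i,j}` with
distinct `j` are in echelon form, hence `rank Ψ = |F(Ψ)|`. Finally every closed subsystem is
maximal of its rank: the indicator of a block is a linear form vanishing on `Ψ` but not on a
root leaving the block, so `Span Ψ` contains no further roots.
-/

section Coordinates

variable {r : ℕ}

theorem eA_apply (i : ℕ) (t : Fin (r + 1)) : eA r i t = if (t : ℕ) + 1 = i then 1 else 0 := rfl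

theorem eA_apply_pred (i : ℕ) {a : ℕ} (ha : 1 ≤ a ∧ a ≤ r + 1) :
    eA r i ⟨a - 1, by omega⟩ = if a = i then 1 else 0 := by
  simp only [eA_apply, Nat.sub_add_cancel ha.1]

theorem eA_eq_single {a : ℕ} (ha : 1 ≤ a ∧ a ≤ r + 1) :
    eA r a = Pi.single (⟨a - 1, by omega⟩ : Fin (r + 1)) (1 : ℚ) := by
  funext t
  simp only [eA_apply, Pi.single_apply, Fin.ext_iff]
  congr 1
  simp only [eq_iff_iff]
  omega

theorem eq_and_eq_of_eA_sub_eA_eq {a b i j : ℕ} (hi : 1 ≤ i ∧ i ≤ r + 1)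
    (hj : 1 ≤ j ∧ j ≤ r + 1) (hij : i ≠ j) (h : eA r a - eA r b = eA r i - eA r j) :
    a = i ∧ b = j := by
  have hvi := congrFun h ⟨i - 1, by omega⟩
  have hvj := congrFun h ⟨j - 1, by omega⟩
  simp only [Pi.sub_apply, eA_apply_pred _ hi, eA_apply_pred _ hj] at hvi hvj
  split_ifs at hvi hvj <;> first | omega | linarith

theorem sub_mem_rootsA_iff {a b : ℕ} :
    eA r a - eA r b ∈ rootsA r ↔ (1 ≤ a ∧ a ≤ r + 1) ∧ (1 ≤ b ∧ b ≤ r + 1) ∧ a ≠ b := by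
  constructor
  · rintro ⟨i, j, hi, hi', hj, hj', hij, h⟩
    obtain ⟨rfl, rfl⟩ := eq_and_eq_of_eA_sub_eA_eq ⟨hi, hi'⟩ ⟨hj, hj'⟩ hij h
    exact ⟨⟨hi, hi'⟩, ⟨hj, hj'⟩, hij⟩
  · rintro ⟨ha, hb, hab⟩
    exact ⟨a, b, ha.1, ha.2, hb.1, hb.2, hab, rfl⟩

theorem alphaA_eq_sub {i b : ℕ} (hb : 1 ≤ b) : alphaA r i (b - 1) = eA r i - eA r b := by
  rw [alphaA, Nat.sub_add_cancel hb]

theorem sub_mem_posA_iff {a b : ℕ} : eA r a - eA r b ∈ posA r ↔ 1 ≤ a ∧ a < b ∧ b ≤ r + 1 := by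
  constructor
  · rintro ⟨i, j, hi, hij, hj, h⟩
    obtain ⟨rfl, rfl⟩ := eq_and_eq_of_eA_sub_eA_eq (r := r) ⟨hi, by omega⟩ ⟨by omega, by omega⟩
      (by omega) h
    omega
  · rintro ⟨ha, hab, hb⟩
    exact ⟨a, b - 1, ha, by omega, by omega, (alphaA_eq_sub (by omega)).symm⟩

theorem alphaA_inj {i j i' j' : ℕ} (hi : 1 ≤ i) (hij : i ≤ j) (hj : j ≤ r)
    (h : alphaA r i j = alphaA r i' j') : i = i' ∧ j = j' := by
  have := eq_and_eq_of_eA_sub_eA_eq (r := r) ⟨hi, by omega⟩ ⟨by omega, by omega⟩ (by omega) h.symm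
  omega

theorem posA_subset_rootsA : posA r ⊆ rootsA r := by
  rintro _ ⟨i, j, hi, hij, hj, rfl⟩
  exact sub_mem_rootsA_iff.2 ⟨⟨hi, by omega⟩, ⟨by omega, by omega⟩, by omega⟩

theorem neg_mem_rootsA {v : Fin (r + 1) → ℚ} (hv : v ∈ rootsA r) : -v ∈ rootsA r := by
  obtain ⟨i, j, hi, hi', hj, hj', hij, rfl⟩ := hv
  exact ⟨j, i, hj, hj', hi, hi', hij.symm, neg_sub _ _⟩

theorem eq_or_eq_of_add_mem_rootsA {a b c d : ℕ} (hab : eA r a - eA r b ∈ rootsA r)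
    (hcd : eA r c - eA r d ∈ rootsA r) (h : eA r a - eA r b + (eA r c - eA r d) ∈ rootsA r) :
    b = c ∨ a = d := by
  obtain ⟨ha, hb, hab⟩ := sub_mem_rootsA_iff.1 hab
  obtain ⟨hc, hd, hcd⟩ := sub_mem_rootsA_iff.1 hcd
  obtain ⟨i, j, hi, hi', hj, hj', hij, h⟩ := h
  by_contra! hne
  have hva := congrFun h ⟨a - 1, by omega⟩
  have hvc := congrFun h ⟨c - 1, by omega⟩
  simp only [Pi.add_apply, Pi.sub_apply, eA_apply_pred _ ha, eA_apply_pred _ hc] at hva hvc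
  split_ifs at hva hvc <;> first | omega | linarith

end Coordinates

section ClosedSubsystems

variable {r : ℕ} {Ψ : Set (Fin (r + 1) → ℚ)}

theorem IsClosedSub.sub_mem_swap (hΨ : IsClosedSub (rootsA r) Ψ) {a b : ℕ}
    (h : eA r a - eA r b ∈ Ψ) : eA r b - eA r a ∈ Ψ :=
  neg_sub (eA r a) (eA r b) ▸ hΨ.2.1 _ h

theorem IsClosedSub.sub_mem_trans (hΨ : IsClosedSub (rootsA r) Ψ) {a b c : ℕ}
    (hab : eA r a - eA r b ∈ Ψ) (hbc : eA r b - eA r c ∈ Ψ) (hac : a ≠ c) :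
    eA r a - eA r c ∈ Ψ := by
  obtain ⟨ha, -, -⟩ := sub_mem_rootsA_iff.1 (hΨ.1 hab)
  obtain ⟨-, hc, -⟩ := sub_mem_rootsA_iff.1 (hΨ.1 hbc)
  rw [← sub_add_sub_cancel _ (eA r b)]
  exact hΨ.2.2 _ hab _ hbc (by rw [sub_add_sub_cancel]; exact sub_mem_rootsA_iff.2 ⟨ha, hc, hac⟩)

theorem isClosedSub_span_inter_rootsA (S : Set (Fin (r + 1) → ℚ)) :
    IsClosedSub (rootsA r) (↑(Submodule.span ℚ S) ∩ rootsA r) :=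
  ⟨Set.inter_subset_right, fun _ hl => ⟨neg_mem hl.1, neg_mem_rootsA hl.2⟩,
    fun _ hl _ hm hlm => ⟨add_mem hl.1 hm.1, hlm⟩⟩

theorem GmapA_subset_span {Q : Set (Fin (r + 1) → ℚ)} (hQ : Q ⊆ rootsA r) :
    GmapA r Q ⊆ Submodule.span ℚ Q := fun _ hv =>
  (hv _ ⟨isClosedSub_span_inter_rootsA Q, Set.subset_inter Submodule.subset_span hQ⟩).1

theorem IsClosedSub.eq_or_sub_mem_iff (hΨ : IsClosedSub (rootsA r) Ψ) {a x y : ℕ}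
    (hxy : eA r x - eA r y ∈ Ψ) :
    (x = a ∨ eA r a - eA r x ∈ Ψ) ↔ (y = a ∨ eA r a - eA r y ∈ Ψ) := by
  constructor
  · rintro (rfl | hx)
    · exact Or.inr hxy
    · by_cases hy : y = a
      exacts [Or.inl hy, Or.inr (hΨ.sub_mem_trans hx hxy (Ne.symm hy))]
  · rintro (rfl | hy)
    · exact Or.inr (hΨ.sub_mem_swap hxy)
    · by_cases hx : x = a
      exacts [Or.inl hx, Or.inr (hΨ.sub_mem_trans hy (hΨ.sub_mem_swap hxy) (Ne.symm hx))]

/-- The indicator `w` of the block `{x | x = a ∨ e_a - e_x ∈ Ψ}` defines a linear form vanishing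
on `Ψ`, hence on its span, whose value at `e_a - e_b` is `1` unless `b` lies in the block. -/
theorem IsClosedSub.mem_of_mem_span (hΨ : IsClosedSub (rootsA r) Ψ) {a b : ℕ}
    (hab : eA r a - eA r b ∈ rootsA r) (h : eA r a - eA r b ∈ Submodule.span ℚ Ψ) :
    eA r a - eA r b ∈ Ψ := by
  obtain ⟨ha, hb, hne⟩ := sub_mem_rootsA_iff.1 hab
  let C : ℕ → Prop := fun x => x = a ∨ eA r a - eA r x ∈ Ψ
  let w : Fin (r + 1) → ℚ := fun t => if C (t + 1) then 1 else 0
  have hw : ∀ {x : ℕ} (hx : 1 ≤ x ∧ x ≤ r + 1), w ⬝ᵥ eA r x = if C x then 1 else 0 := by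
    intro x hx
    conv_lhs => rw [eA_eq_single hx, dotProduct_single, mul_one]
    simp only [w, Nat.sub_add_cancel hx.1]
  have hspan : ∀ v ∈ Submodule.span ℚ Ψ, w ⬝ᵥ v = 0 := by
    intro v hv
    induction hv using Submodule.span_induction with
    | mem v hv =>
      obtain ⟨x, y, hx, hx', hy, hy', -, rfl⟩ := hΨ.1 hv
      rw [dotProduct_sub, hw ⟨hx, hx'⟩, hw ⟨hy, hy'⟩, if_congr (hΨ.eq_or_sub_mem_iff hv) rfl rfl,
        sub_self]
    | zero => exact dotProduct_zero w
    | add v v' _ _ hv hv' => rw [dotProduct_add, hv, hv', add_zero]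
    | smul c v _ hv => rw [dotProduct_smul, hv, smul_zero]
  have hb' := hspan _ h
  rw [dotProduct_sub, hw ha, hw hb, if_pos (Or.inl rfl)] at hb'
  by_cases hCb : C b
  · exact hCb.resolve_left (Ne.symm hne)
  · rw [if_neg hCb] at hb'
    norm_num at hb'

theorem IsClosedSub.isMaxClosedOfRank (hΨ : IsClosedSub (rootsA r) Ψ) :
    IsMaxClosedOfRank (rootsA r) Ψ (rankOf Ψ) := by
  refine ⟨hΨ, rfl, fun Ψ' hΨ' hrank hsub => (Set.Subset.antisymm ?_ hsub)⟩
  have hspan : Submodule.span ℚ Ψ = Submodule.span ℚ Ψ' :=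
    Submodule.eq_of_le_of_finrank_le (Submodule.span_mono hsub) hrank.le
  intro v hv
  obtain ⟨a, b, -, -, -, -, -, rfl⟩ := hΨ'.1 hv
  exact hΨ.mem_of_mem_span (hΨ'.1 hv) (hspan ▸ Submodule.subset_span hv)

end ClosedSubsystems

section LastNonzero

variable {ι K : Type*} [Field K] [DecidableEq K] [LinearOrder ι] [OrderBot ι] [Fintype ι]

-- junk value `⊥` at `v = 0`
def lastNonzero (v : ι → K) : ι := (Finset.univ.filter (v · ≠ 0)).sup id

theorem apply_eq_zero_of_lastNonzero_lt {v : ι → K} {t : ι} (h : lastNonzero v < t) :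
    v t = 0 := by
  by_contra ht
  exact h.not_ge (Finset.le_sup (f := id) (Finset.mem_filter.2 ⟨Finset.mem_univ t, ht⟩))

theorem apply_lastNonzero_ne_zero {v : ι → K} (hv : v ≠ 0) : v (lastNonzero v) ≠ 0 := by
  obtain ⟨t, ht⟩ := Function.ne_iff.1 hv
  obtain ⟨t', ht', he⟩ := Finset.exists_mem_eq_sup (Finset.univ.filter (v · ≠ 0))
    ⟨t, by simpa using ht⟩ id
  rw [lastNonzero, he]
  exact (Finset.mem_filter.1 ht').2

theorem linearIndepOn_of_injOn_lastNonzero {s : Finset (ι → K)} (h0 : (0 : ι → K) ∉ s)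
    (hinj : Set.InjOn lastNonzero (s : Set (ι → K))) : LinearIndepOn K id (s : Set (ι → K)) := by
  induction s using Finset.induction_on_max_value (lastNonzero (ι := ι) (K := K)) with
  | empty => simp
  | insert v s hvs hmax ih =>
    rw [Finset.coe_insert] at hinj ⊢
    refine (ih (fun h => h0 (Finset.mem_insert_of_mem h))
      (hinj.mono (Set.subset_insert _ _))).id_insert fun hv => ?_
    have hvanish : Submodule.span K (s : Set (ι → K)) ≤
        LinearMap.ker (LinearMap.proj (R := K) (φ := fun _ : ι => K) (lastNonzero v)) := by
      refine Submodule.span_le.2 fun w hw => ?_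
      have hlt : lastNonzero w < lastNonzero v := (hmax w hw).lt_of_ne fun h =>
        hvs (hinj (Set.mem_insert_of_mem _ hw) (Set.mem_insert _ _) h ▸ hw)
      exact (apply_eq_zero_of_lastNonzero_lt hlt : w (lastNonzero v) = 0)
    exact apply_lastNonzero_ne_zero (fun h => h0 (h ▸ Finset.mem_insert_self _ _)) (hvanish hv)

end LastNonzero

section FmapA

variable {r : ℕ} {Ψ P : Set (Fin (r + 1) → ℚ)}

theorem alphaA_mem_FmapA_iff {i j : ℕ} (hi : 1 ≤ i) (hij : i ≤ j) (hj : j ≤ r) :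
    alphaA r i j ∈ FmapA r Ψ ↔ alphaA r i j ∈ Ψ ∧
      (∀ j', i ≤ j' → j' < j → alphaA r i j' ∉ Ψ) ∧ ∀ i', i < i' → i' ≤ j → alphaA r i' j ∉ Ψ := by
  constructor
  · rintro ⟨i₀, j₀, -, -, -, he, h⟩
    obtain ⟨rfl, rfl⟩ := alphaA_inj hi hij hj he
    exact h
  · exact fun h => ⟨i, j, hi, hij, hj, rfl, h⟩

theorem FmapA_subset : FmapA r Ψ ⊆ Ψ := fun _ ⟨_, _, _, _, _, _, hv, _⟩ => hv

theorem FmapA_subset_posA : FmapA r Ψ ⊆ posA r :=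
  fun _ ⟨i, j, hi, hij, hj, hv, _⟩ => ⟨i, j, hi, hij, hj, hv⟩

theorem starA_FmapA (Ψ : Set (Fin (r + 1) → ℚ)) : starA r (FmapA r Ψ) := by
  intro i j i' j' hi hij hj hi' hij' hj' hm hm' hne
  rw [alphaA_mem_FmapA_iff hi hij hj] at hm
  rw [alphaA_mem_FmapA_iff hi' hij' hj'] at hm'
  constructor
  · rintro rfl
    rcases lt_trichotomy j j' with h | rfl | h
    exacts [hm'.2.1 j hij h hm.1, hne rfl, hm.2.1 j' hij' h hm'.1]
  · rintro rfl
    rcases lt_trichotomy i i' with h | rfl | h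
    exacts [hm.2.2 i' h hij' hm'.1, hne rfl, hm'.2.2 i h hij hm.1]

theorem lastNonzero_alphaA {i j : ℕ} (hij : i ≤ j) (hj : j ≤ r) :
    lastNonzero (alphaA r i j) = ⟨j, by omega⟩ := by
  apply le_antisymm
  · refine Finset.sup_le fun t ht => ?_
    by_contra! hjt
    rw [id, Fin.lt_def, Fin.val_mk] at hjt
    refine (Finset.mem_filter.1 ht).2 ?_
    simp only [alphaA, Pi.sub_apply, eA_apply, if_neg (show (t : ℕ) + 1 ≠ i by omega),
      if_neg (show (t : ℕ) + 1 ≠ j + 1 by omega), sub_zero]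
  · refine Finset.le_sup (f := id) (Finset.mem_filter.2 ⟨Finset.mem_univ _, ?_⟩)
    simp only [alphaA, Pi.sub_apply, eA_apply, if_neg (show j + 1 ≠ i by omega)]
    norm_num

theorem posA_finite : (posA r).Finite := by
  refine (((Set.finite_Iic r).prod (Set.finite_Iic r)).image
    fun p : ℕ × ℕ => alphaA r p.1 p.2).subset ?_
  rintro _ ⟨i, j, hi, hij, hj, rfl⟩
  exact ⟨(i, j), ⟨Set.mem_Iic.2 (by omega), Set.mem_Iic.2 hj⟩, rfl⟩

theorem zero_notMem_posA : (0 : Fin (r + 1) → ℚ) ∉ posA r := by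
  rintro ⟨i, j, hi, hij, hj, h⟩
  have h' := congrFun h ⟨j, by omega⟩
  simp only [alphaA, Pi.zero_apply, Pi.sub_apply, eA_apply, if_neg (show j + 1 ≠ i by omega)] at h'
  norm_num at h'

theorem starA.linearIndepOn (hstar : starA r P) (hP : P ⊆ posA r) : LinearIndepOn ℚ id P := by
  obtain ⟨s, rfl⟩ := (posA_finite.subset hP).exists_finset_coe
  refine linearIndepOn_of_injOn_lastNonzero (fun h0 => zero_notMem_posA (hP h0)) ?_
  intro v hv w hw hvw
  obtain ⟨i, j, hi, hij, hj, rfl⟩ := hP hv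
  obtain ⟨i', j', hi', hij', hj', rfl⟩ := hP hw
  rw [lastNonzero_alphaA hij hj, lastNonzero_alphaA hij' hj', Fin.mk.injEq] at hvw
  by_contra hne
  exact (hstar i j i' j' hi hij hj hi' hij' hj' hv hw hne).2 hvw

theorem starA.finrank_span (hstar : starA r P) (hP : P ⊆ posA r) :
    Module.finrank ℚ (Submodule.span ℚ P) = P.ncard := by
  obtain ⟨s, rfl⟩ := (posA_finite.subset hP).exists_finset_coe
  rw [finrank_span_finset_eq_card (hstar.linearIndepOn hP), Set.ncard_coe_finset]

theorem IsClosedSub.exists_between_of_notMem_FmapA (hΨ : IsClosedSub (rootsA r) Ψ) {a b : ℕ}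
    (hab : a < b) (hv : eA r a - eA r b ∈ Ψ) (hF : eA r a - eA r b ∉ FmapA r Ψ) :
    ∃ c, a < c ∧ c < b ∧ eA r a - eA r c ∈ Ψ ∧ eA r c - eA r b ∈ Ψ := by
  obtain ⟨ha, hb, -⟩ := sub_mem_rootsA_iff.1 (hΨ.1 hv)
  rw [← alphaA_eq_sub hb.1, alphaA_mem_FmapA_iff ha.1 (by omega) (by omega)] at hF
  by_cases h : ∃ j', a ≤ j' ∧ j' < b - 1 ∧ alphaA r a j' ∈ Ψ
  · obtain ⟨j', haj', hj'b, hj'⟩ := h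
    exact ⟨j' + 1, by omega, by omega, hj', hΨ.sub_mem_trans (hΨ.sub_mem_swap hj') hv (by omega)⟩
  · obtain ⟨i', hai', hi'b, hi'⟩ : ∃ i', a < i' ∧ i' ≤ b - 1 ∧ alphaA r i' (b - 1) ∈ Ψ := by
      by_contra h'
      exact hF ⟨alphaA_eq_sub hb.1 ▸ hv, fun j' h₁ h₂ h₃ => h ⟨j', h₁, h₂, h₃⟩,
        fun i' h₁ h₂ h₃ => h' ⟨i', h₁, h₂, h₃⟩⟩
    rw [alphaA_eq_sub hb.1] at hi'
    exact ⟨i', hai', by omega, hΨ.sub_mem_trans hv (hΨ.sub_mem_swap hi') (by omega), hi'⟩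

end FmapA

section GmapAFmapA

variable {r : ℕ} {Ψ : Set (Fin (r + 1) → ℚ)}

theorem IsClosedSub.subset_of_FmapA_subset (hΨ : IsClosedSub (rootsA r) Ψ)
    {Θ : Set (Fin (r + 1) → ℚ)} (hΘ : IsClosedSub (rootsA r) Θ) (hF : FmapA r Ψ ⊆ Θ) : Ψ ⊆ Θ := by
  have hlt : ∀ n a b, b - a = n → a < b → eA r a - eA r b ∈ Ψ → eA r a - eA r b ∈ Θ := by
    intro n
    induction n using Nat.strong_induction_on with
    | _ n ih =>
      intro a b hn hab hv
      by_cases hvF : eA r a - eA r b ∈ FmapA r Ψ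
      · exact hF hvF
      obtain ⟨c, hac, hcb, hac', hcb'⟩ := hΨ.exists_between_of_notMem_FmapA hab hv hvF
      exact hΘ.sub_mem_trans (ih _ (by omega) a c rfl hac hac') (ih _ (by omega) c b rfl hcb hcb')
        (by omega)
  intro v hv
  obtain ⟨a, b, -, -, -, -, hne, rfl⟩ := hΨ.1 hv
  rcases lt_or_gt_of_ne hne with h | h
  · exact hlt _ a b rfl h hv
  · exact hΘ.sub_mem_swap (hlt _ b a rfl h (hΨ.sub_mem_swap hv))

theorem IsClosedSub.GmapA_FmapA (hΨ : IsClosedSub (rootsA r) Ψ) : GmapA r (FmapA r Ψ) = Ψ :=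
  Set.Subset.antisymm (Set.sInter_subset_of_mem ⟨hΨ, FmapA_subset⟩)
    (Set.subset_sInter fun _ hΘ => hΨ.subset_of_FmapA_subset hΘ.1 hΘ.2)

theorem IsClosedSub.rankOf_eq_ncard_FmapA (hΨ : IsClosedSub (rootsA r) Ψ) :
    rankOf Ψ = (FmapA r Ψ).ncard := by
  have hspan : Submodule.span ℚ Ψ = Submodule.span ℚ (FmapA r Ψ) := by
    refine le_antisymm (Submodule.span_le.2 ?_) (Submodule.span_mono FmapA_subset)
    conv_lhs => rw [← hΨ.GmapA_FmapA]
    exact GmapA_subset_span (FmapA_subset_posA.trans posA_subset_rootsA)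
  rw [rankOf, hspan, (starA_FmapA Ψ).finrank_span FmapA_subset_posA]

end GmapAFmapA

section FmapAGmapA

open Relation

variable {r : ℕ} {P : Set (Fin (r + 1) → ℚ)}

def edgeA (r : ℕ) (P : Set (Fin (r + 1) → ℚ)) (a b : ℕ) : Prop :=
  a < b ∧ eA r a - eA r b ∈ P

def rootsOfRel (r : ℕ) (R : ℕ → ℕ → Prop) : Set (Fin (r + 1) → ℚ) :=
  {v ∈ rootsA r | ∃ a b, R a b ∧ v = eA r a - eA r b}

theorem sub_mem_rootsOfRel_iff {R : ℕ → ℕ → Prop} {a b : ℕ} (h : eA r a - eA r b ∈ rootsA r) :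
    eA r a - eA r b ∈ rootsOfRel r R ↔ R a b := by
  refine ⟨fun ⟨_, c, d, hcd, he⟩ => ?_, fun hR => ⟨h, a, b, hR, rfl⟩⟩
  obtain ⟨ha, hb, hab⟩ := sub_mem_rootsA_iff.1 h
  obtain ⟨rfl, rfl⟩ := eq_and_eq_of_eA_sub_eA_eq ha hb hab he.symm
  exact hcd

theorem isClosedSub_rootsOfRel {R : ℕ → ℕ → Prop} (hR : Equivalence R) :
    IsClosedSub (rootsA r) (rootsOfRel r R) := by
  refine ⟨fun _ hv => hv.1, ?_, ?_⟩
  · rintro _ ⟨hv, a, b, hab, rfl⟩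
    exact ⟨neg_mem_rootsA hv, b, a, hR.symm hab, neg_sub _ _⟩
  · rintro _ ⟨hl, a, b, hab, rfl⟩ _ ⟨hm, c, d, hcd, rfl⟩ hlm
    refine ⟨hlm, ?_⟩
    rcases eq_or_eq_of_add_mem_rootsA hl hm hlm with rfl | rfl
    · exact ⟨a, d, hR.trans hab hcd, sub_add_sub_cancel _ _ _⟩
    · exact ⟨c, b, hR.trans hcd hab, by rw [add_comm (eA r a - eA r b), sub_add_sub_cancel]⟩

theorem IsClosedSub.eq_or_sub_mem_of_eqvGen {Θ : Set (Fin (r + 1) → ℚ)}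
    (hΘ : IsClosedSub (rootsA r) Θ) (hPΘ : P ⊆ Θ) {a b : ℕ}
    (h : EqvGen (edgeA r P) a b) : a = b ∨ eA r a - eA r b ∈ Θ := by
  induction h with
  | rel x y hxy => exact Or.inr (hPΘ hxy.2)
  | refl => exact Or.inl rfl
  | symm x y _ ih => exact ih.imp Eq.symm hΘ.sub_mem_swap
  | trans x y z _ _ ihxy ihyz =>
    rcases ihxy with rfl | hxy
    · exact ihyz
    rcases ihyz with rfl | hyz
    · exact Or.inr hxy
    by_cases hxz : x = z
    exacts [Or.inl hxz, Or.inr (hΘ.sub_mem_trans hxy hyz hxz)]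

theorem GmapA_eq_rootsOfRel (hP : P ⊆ posA r) :
    GmapA r P = rootsOfRel r (EqvGen (edgeA r P)) := by
  refine Set.Subset.antisymm (Set.sInter_subset_of_mem
    ⟨isClosedSub_rootsOfRel (EqvGen.is_equivalence _), fun v hv => ?_⟩) ?_
  · obtain ⟨i, j, hi, hij, hj, rfl⟩ := hP hv
    exact ⟨posA_subset_rootsA (hP hv), i, j + 1, .rel _ _ ⟨by omega, hv⟩, rfl⟩
  · rintro _ ⟨hv, a, b, hab, rfl⟩ Θ ⟨hΘ, hPΘ⟩
    exact (hΘ.eq_or_sub_mem_of_eqvGen hPΘ hab).resolve_left (sub_mem_rootsA_iff.1 hv).2.2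

theorem isClosedSub_GmapA (hP : P ⊆ posA r) : IsClosedSub (rootsA r) (GmapA r P) :=
  GmapA_eq_rootsOfRel hP ▸ isClosedSub_rootsOfRel (EqvGen.is_equivalence _)

theorem le_of_reflTransGen_edgeA {a b : ℕ} (h : ReflTransGen (edgeA r P) a b) :
    a ≤ b := by
  induction h with
  | refl => rfl
  | tail _ hbc ih => exact ih.trans hbc.1.le

theorem starA.eq_and_eq_of_edgeA (hstar : starA r P) (hP : P ⊆ posA r) {a b c d : ℕ}
    (hab : edgeA r P a b) (hcd : edgeA r P c d) (h : a = c ∨ b = d) : a = c ∧ b = d := by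
  obtain ⟨ha, -, hb⟩ := sub_mem_posA_iff.1 (hP hab.2)
  obtain ⟨hc, -, hd⟩ := sub_mem_posA_iff.1 (hP hcd.2)
  have := hab.1
  have := hcd.1
  have hab' := hab.2
  have hcd' := hcd.2
  rw [← alphaA_eq_sub (by omega)] at hab' hcd'
  by_cases he : alphaA r a (b - 1) = alphaA r c (d - 1)
  · have := alphaA_inj ha (by omega) (by omega) he
    omega
  · have := hstar a (b - 1) c (d - 1) ha (by omega) (by omega) hc (by omega) (by omega) hab' hcd' he
    omega

/-- Under (⋆) every index has at most one outgoing and one incoming edge, so a connected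
component of `P` is an increasing path. -/
theorem starA.reflTransGen_of_eqvGen (hstar : starA r P) (hP : P ⊆ posA r) {a b : ℕ}
    (h : EqvGen (edgeA r P) a b) :
    ReflTransGen (edgeA r P) a b ∨ ReflTransGen (edgeA r P) b a := by
  rw [← EqvGen.reflTransGen_symmGen] at h
  induction h with
  | refl => exact Or.inl .refl
  | tail _ hcb ih =>
    rcases ih with hac | hca <;> rcases hcb with hcb | hbc
    · exact Or.inl (hac.tail hcb)
    · rcases hac.cases_tail with rfl | ⟨d, had, hdc⟩
      · exact Or.inr (.single hbc)
      · obtain ⟨rfl, -⟩ := hstar.eq_and_eq_of_edgeA hP hdc hbc (Or.inr rfl)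
        exact Or.inl had
    · rcases hca.cases_head with rfl | ⟨d, hcd, hda⟩
      · exact Or.inl (.single hcb)
      · obtain ⟨-, rfl⟩ := hstar.eq_and_eq_of_edgeA hP hcd hcb (Or.inl rfl)
        exact Or.inr hda
    · exact Or.inr (hca.head hbc)

theorem starA.alphaA_mem_GmapA_iff (hstar : starA r P) (hP : P ⊆ posA r) {i j : ℕ}
    (hi : 1 ≤ i) (hij : i ≤ j) (hj : j ≤ r) :
    alphaA r i j ∈ GmapA r P ↔ ReflTransGen (edgeA r P) i (j + 1) := by
  rw [GmapA_eq_rootsOfRel hP, alphaA, sub_mem_rootsOfRel_iff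
    (sub_mem_rootsA_iff.2 ⟨⟨hi, by omega⟩, ⟨by omega, by omega⟩, by omega⟩)]
  refine ⟨fun h => (hstar.reflTransGen_of_eqvGen hP h).resolve_right fun h' => ?_,
    EqvGen.reflTransGen_le_eqvGen _ _ _⟩
  have := le_of_reflTransGen_edgeA h'
  omega

theorem starA.FmapA_GmapA_subset (hstar : starA r P) (hP : P ⊆ posA r) :
    FmapA r (GmapA r P) ⊆ P := by
  rintro _ ⟨i, j, hi, hij, hj, rfl, hv, hmin, -⟩
  rw [hstar.alphaA_mem_GmapA_iff hP hi hij hj] at hv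
  obtain h | ⟨c, hic, hcj⟩ := hv.cases_head
  · omega
  obtain hc | hc := (le_of_reflTransGen_edgeA hcj).eq_or_lt
  · subst hc
    exact hic.2
  · have hic' := hic.1
    refine absurd ?_ (hmin (c - 1) (by omega) (by omega))
    rw [hstar.alphaA_mem_GmapA_iff hP hi (by omega) (by omega), Nat.sub_add_cancel (by omega)]
    exact .single hic

theorem starA.subset_FmapA_GmapA (hstar : starA r P) (hP : P ⊆ posA r) :
    P ⊆ FmapA r (GmapA r P) := by
  intro v hv
  obtain ⟨i, j, hi, hij, hj, rfl⟩ := hP hv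
  have hedge : edgeA r P i (j + 1) := ⟨by omega, hv⟩
  refine (alphaA_mem_FmapA_iff hi hij hj).2
    ⟨(hstar.alphaA_mem_GmapA_iff hP hi hij hj).2 (.single hedge), fun j' hij' hj'j h => ?_,
      fun i' hii' hi'j h => ?_⟩
  · rw [hstar.alphaA_mem_GmapA_iff hP hi hij' (by omega)] at h
    obtain h | ⟨c, hic, hcj⟩ := h.cases_head
    · omega
    obtain ⟨-, rfl⟩ := hstar.eq_and_eq_of_edgeA hP hic hedge (Or.inl rfl)
    have := le_of_reflTransGen_edgeA hcj
    omega
  · rw [hstar.alphaA_mem_GmapA_iff hP (by omega) hi'j hj] at h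
    obtain h | ⟨d, hid, hdj⟩ := h.cases_tail
    · omega
    obtain ⟨rfl, -⟩ := hstar.eq_and_eq_of_edgeA hP hdj hedge (Or.inr rfl)
    have := le_of_reflTransGen_edgeA hid
    omega

theorem starA.FmapA_GmapA (hstar : starA r P) (hP : P ⊆ posA r) : FmapA r (GmapA r P) = P :=
  (hstar.FmapA_GmapA_subset hP).antisymm (hstar.subset_FmapA_GmapA hP)

end FmapAGmapA

theorem statement18_general (r k : ℕ) :
    Set.BijOn (FmapA r)
      {Ψ : Set (Fin (r + 1) → ℚ) | IsMaxClosedOfRank (rootsA r) Ψ (r - k)}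
      {P : Set (Fin (r + 1) → ℚ) | P ⊆ posA r ∧ P.ncard = r - k ∧ starA r P} ∧
    Set.InvOn (GmapA r) (FmapA r)
      {Ψ : Set (Fin (r + 1) → ℚ) | IsMaxClosedOfRank (rootsA r) Ψ (r - k)}
      {P : Set (Fin (r + 1) → ℚ) | P ⊆ posA r ∧ P.ncard = r - k ∧ starA r P} := by
  have hinv : Set.InvOn (GmapA r) (FmapA r)
      {Ψ | IsMaxClosedOfRank (rootsA r) Ψ (r - k)}
      {P | P ⊆ posA r ∧ P.ncard = r - k ∧ starA r P} :=
    ⟨fun Ψ hΨ => hΨ.1.GmapA_FmapA, fun P hP => hP.2.2.FmapA_GmapA hP.1⟩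
  refine ⟨hinv.bijOn ?_ ?_, hinv⟩
  · rintro Ψ ⟨hΨ, hrank, -⟩
    exact ⟨FmapA_subset_posA, hΨ.rankOf_eq_ncard_FmapA ▸ hrank, starA_FmapA Ψ⟩
  · rintro P ⟨hP, hcard, hstar⟩
    have hG := isClosedSub_GmapA hP
    have hrank : rankOf (GmapA r P) = r - k := by
      rw [hG.rankOf_eq_ncard_FmapA, hstar.FmapA_GmapA hP, hcard]
    exact hrank ▸ hG.isMaxClosedOfRank

theorem statement18 (r k : ℕ) (hr : 1 ≤ r) (hk : k ≤ r) :
    Set.BijOn (FmapA r)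
      {Ψ : Set (Fin (r + 1) → ℚ) | IsMaxClosedOfRank (rootsA r) Ψ (r - k)}
      {P : Set (Fin (r + 1) → ℚ) | P ⊆ posA r ∧ P.ncard = r - k ∧ starA r P} ∧
    Set.InvOn (GmapA r) (FmapA r)
      {Ψ : Set (Fin (r + 1) → ℚ) | IsMaxClosedOfRank (rootsA r) Ψ (r - k)}
      {P : Set (Fin (r + 1) → ℚ) | P ⊆ posA r ∧ P.ncard = r - k ∧ starA r P} :=
  statement18_general r k
end
end
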